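/- Let K be a field and G a group acting faithfully on K by field automorphisms. For a finite subset B ⊆ K write G_{(B)} = {g ∈ G | g•b = b for all b ∈ B}. Assume G is precompact: every subgroup of G containing G_{(B)} for some finite B ⊆ K has finite index in G. Let V be a smooth K-semilinear representation of G, i.e. a K-vector space with an additive G-action satisfying g•(c•v) = (g•c)•(g•v), such that every v ∈ V is fixed by G_{(B)} for some finite B ⊆ K. Then the natural K-linear map K ⊗_{K^G} V^G → V, c ⊗ v ↦ c•v, is bijective; equivalently, V is a direct sum of copies of K. -/

import Mathlib

/-! A family of `G`-fixed vectors that is `K^G`-independent stays `K`-independent: applying `g`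
to a normalised shortest `K`-relation and subtracting gives a shorter one, so all coefficients
lie in `K^G`. This gives injectivity.

For surjectivity, a vector `v` is fixed by `P = G_{(B)}`, which has finite index. On `L = K^P`
the maps `c ↦ g c`, one for each coset `gP`, are distinct characters `L → K`, because `B ⊆ L`.
By Dedekind's lemma the vectors `(g c)_{gP}`, `c ∈ L`, span `K^{G/P}`. In particular they span
the indicator of the trivial coset. Applying `x ↦ ∑_{gP} x_{gP} • g v` to such a combination
writes `v` as a `K`-combination of the `G`-fixed vectors `∑_{gP} g (c v)`. -/
set_option synthInstance.maxHeartbeats 1000000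
set_option maxHeartbeats 1000000

/-- The automorphism group structure on `V ≃+ V` (composition), as `AddAut` had it in older Mathlib. -/
instance addEquivSelfGroup (V : Type) [Add V] : Group (V ≃+ V) where
  mul f g := g.trans f
  one := AddEquiv.refl V
  inv := AddEquiv.symm
  mul_assoc _ _ _ := rfl
  one_mul _ := rfl
  mul_one _ := rfl
  inv_mul_cancel e := AddEquiv.ext (fun x => e.symm_apply_apply x)

/-- The fixed subfield `K^G` of an action of `G` on a field `K` by field
automorphisms. -/
def fixedSubfield (K : Type) [Field K] (G : Type) [Group G]
    (act : G →* (K ≃+* K)) : Subfield K where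
  carrier := {c | ∀ g, act g c = c}
  mul_mem' := fun {a b} ha hb g => by rw [map_mul, ha g, hb g]
  one_mem' := fun g => map_one _
  add_mem' := fun {a b} ha hb g => by rw [map_add, ha g, hb g]
  zero_mem' := fun g => map_zero _
  neg_mem' := fun {a} ha g => by rw [map_neg, ha g]
  inv_mem' := fun a ha g => by rw [map_inv₀, ha g]

/-- The fixed vectors `V^G` of a `K`-semilinear representation `(V, ρ)` of `G`,
as a `K^G`-submodule of `V`. -/
def fixedSubmodule (K : Type) [Field K] (G : Type) [Group G] (act : G →* (K ≃+* K))
    (V : Type) [AddCommGroup V] [Module K V] (ρ : G →* (V ≃+ V))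
    (hsemi : ∀ (g : G) (c : K) (v : V), ρ g (c • v) = act g c • ρ g v) :
    Submodule (fixedSubfield K G act) V where
  carrier := {v | ∀ g, ρ g v = v}
  add_mem' := fun {a b} ha hb g => by rw [map_add, ha g, hb g]
  zero_mem' := fun g => map_zero _
  smul_mem' := fun c v hv g => by
    have : (c • v : V) = (↑c : K) • v := rfl
    rw [this, hsemi g ↑c v, c.2 g, hv g]

/-- The natural `K^G`-linear map `K ⊗_{K^G} V^G → V`, `c ⊗ v ↦ c • v`. -/
noncomputable def natTensorMap (K : Type) [Field K] (G : Type) [Group G]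
    (act : G →* (K ≃+* K))
    (V : Type) [AddCommGroup V] [Module K V] (ρ : G →* (V ≃+ V))
    (hsemi : ∀ (g : G) (c : K) (v : V), ρ g (c • v) = act g c • ρ g v) :
    TensorProduct (fixedSubfield K G act) K (fixedSubmodule K G act V ρ hsemi)
      →ₗ[fixedSubfield K G act] V :=
  TensorProduct.lift (LinearMap.mk₂ (fixedSubfield K G act)
    (fun (c : K) (v : fixedSubmodule K G act V ρ hsemi) => c • (v : V))
    (fun m₁ m₂ v => add_smul m₁ m₂ (v : V))
    (fun a m v => by
      show ((a • m) : K) • (v : V) = a • (m • (v : V))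
      have h1 : (a • m : K) = (↑a : K) * m := rfl
      have h2 : a • (m • (v : V)) = (↑a : K) • (m • (v : V)) := rfl
      rw [h1, h2, mul_smul])
    (fun m v₁ v₂ => by
      show m • ((v₁ + v₂ : _) : V) = m • (v₁ : V) + m • (v₂ : V)
      rw [Submodule.coe_add, smul_add])
    (fun a m v => by
      show m • ((a • v : _) : V) = a • (m • (v : V))
      have h1 : ((a • v : _) : V) = (↑a : K) • (v : V) := rfl
      have h2 : a • (m • (v : V)) = (↑a : K) • (m • (v : V)) := rfl
      rw [h1, h2, smul_comm]))

theorem addEquivSelfGroup_mul_apply {V : Type} [Add V] (f g : V ≃+ V) (x : V) :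
    (f * g) x = f (g x) := rfl

theorem span_range_eval_eq_top {ι X K : Type*} [Fintype ι] [Field K] {f : ι → X → K}
    (hf : LinearIndependent K f) : Submodule.span K (Set.range fun x i => f i x) = ⊤ := by
  classical
  by_contra hW
  obtain ⟨φ, hφ, hφW⟩ :=
    Submodule.exists_dual_map_eq_bot_of_lt_top (lt_top_iff_ne_top.2 hW) inferInstance
  -- A nonzero functional vanishing on the evaluation vectors is a linear relation among the `f i`.
  set a : ι → K := fun i => φ fun j => if i = j then 1 else 0
  have hrel : ∑ i, a i • f i = 0 := funext fun x => by
    have hx : φ (fun i => f i x) = 0 :=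
      (Submodule.eq_bot_iff _).1 hφW _
        (Submodule.mem_map_of_mem (Submodule.subset_span ⟨x, rfl⟩))
    rw [LinearMap.pi_apply_eq_sum_univ] at hx
    simpa [mul_comm] using hx
  have ha := Fintype.linearIndependent_iff.1 hf a hrel
  exact hφ (LinearMap.ext fun x => by simp [LinearMap.pi_apply_eq_sum_univ φ x, a, ha])

section CosetSum

variable {G V : Type} [Group G] [AddCommGroup V] (ρ : G →* (V ≃+ V))

theorem apply_eq_of_mk_eq {P : Subgroup G} {v : V} (hv : ∀ g ∈ P, ρ g v = v) {a b : G}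
    (h : (a : G ⧸ P) = b) : ρ a v = ρ b v := by
  rw [← mul_inv_cancel_left a b, map_mul, addEquivSelfGroup_mul_apply,
    hv _ (QuotientGroup.eq.1 h)]

theorem apply_sum_out_eq_self (P : Subgroup G) [Fintype (G ⧸ P)] {v : V}
    (hv : ∀ g ∈ P, ρ g v = v) (g : G) :
    ρ g (∑ q : G ⧸ P, ρ q.out v) = ∑ q : G ⧸ P, ρ q.out v := by
  rw [map_sum]
  refine Fintype.sum_equiv (MulAction.toPerm g) _ _ fun q => ?_
  rw [← addEquivSelfGroup_mul_apply, ← map_mul]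
  refine apply_eq_of_mk_eq ρ hv ?_
  rw [QuotientGroup.out_eq', MulAction.toPerm_apply, ← MulAction.Quotient.coe_smul_out,
    smul_eq_mul]

end CosetSum

section Semilinear

variable {K G V : Type} [Field K] [Group G] {act : G →* (K ≃+* K)}
  [AddCommGroup V] [Module K V] {ρ : G →* (V ≃+ V)}
  (hsemi : ∀ (g : G) (c : K) (v : V), ρ g (c • v) = act g c • ρ g v)

include hsemi in
theorem apply_sum_smul_of_fixed {ι : Type} {w : ι → V} (hw : ∀ i g, ρ g (w i) = w i)
    (s : Finset ι) (c : ι → K) (g : G) :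
    ρ g (∑ i ∈ s, c i • w i) = ∑ i ∈ s, act g (c i) • w i := by
  simp only [map_sum, hsemi, hw]

include hsemi in
theorem linearIndependent_of_fixedSubfield {ι : Type} {w : ι → V}
    (hw : ∀ i g, ρ g (w i) = w i)
    (hli : LinearIndependent (fixedSubfield K G act) w) : LinearIndependent K w := by
  classical
  rw [linearIndependent_iff']
  intro s
  induction s using Finset.strongInduction with | H s ih => ?_
  intro c hc i₀ hi₀
  by_contra hne
  set d : ι → K := fun i => (c i₀)⁻¹ * c i
  have hd : ∑ i ∈ s, d i • w i = 0 := by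
    simp only [d, mul_smul, ← Finset.smul_sum, hc, smul_zero]
  have hd₀ : d i₀ = 1 := inv_mul_cancel₀ hne
  -- `act g d - d` is a relation with one coefficient fewer, so it vanishes by minimality.
  have hd_fixed : ∀ i ∈ s, ∀ g, act g (d i) = d i := by
    intro i hi g
    obtain rfl | hi₀' := eq_or_ne i i₀
    · rw [hd₀, map_one]
    have hrel : ∑ j ∈ s.erase i₀, (act g (d j) - d j) • w j = 0 := by
      rw [Finset.sum_erase _ (by rw [hd₀, map_one, sub_self, zero_smul])]
      simp only [sub_smul, Finset.sum_sub_distrib, ← apply_sum_smul_of_fixed hsemi hw, hd,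
        map_zero, sub_zero]
    exact sub_eq_zero.1
      (ih _ (Finset.erase_ssubset hi₀) _ hrel i (Finset.mem_erase.2 ⟨hi₀', hi⟩))
  set d' : ι → fixedSubfield K G act :=
    fun i => if h : i ∈ s then ⟨d i, hd_fixed i h⟩ else 0
  have hd' : ∑ i ∈ s, d' i • w i = 0 := by
    rw [← hd]
    refine Finset.sum_congr rfl fun i hi => ?_
    simp only [d', dif_pos hi]
    rfl
  have := congrArg Subtype.val (linearIndependent_iff'.1 hli s d' hd' i₀ hi₀)
  simp only [d', dif_pos hi₀, hd₀] at this
  exact one_ne_zero this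

theorem natTensorMap_eq_liftBaseChange :
    ⇑(natTensorMap K G act V ρ hsemi) =
      ⇑((fixedSubmodule K G act V ρ hsemi).subtype.liftBaseChange K) := by
  funext x
  induction x using TensorProduct.induction_on with
  | zero => simp only [map_zero]
  | tmul c m => rfl
  | add x y hx hy => simp only [map_add, hx, hy]

include hsemi in
theorem injective_liftBaseChange_fixedSubmodule :
    Function.Injective ((fixedSubmodule K G act V ρ hsemi).subtype.liftBaseChange K) := by
  set b := Module.Basis.ofVectorSpace (fixedSubfield K G act) (fixedSubmodule K G act V ρ hsemi)
  refine LinearMap.injective_of_linearIndependent (b.baseChange K).span_eq ?_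
  have hcomp :
      ⇑((fixedSubmodule K G act V ρ hsemi).subtype.liftBaseChange K) ∘ ⇑(b.baseChange K) =
        fun i => (b i : V) := by
    funext i
    simp [Module.Basis.baseChange_apply]
  rw [hcomp]
  exact linearIndependent_of_fixedSubfield hsemi (fun i g => (b i).2 g)
    (b.linearIndependent.map' _ (Submodule.ker_subtype _))

theorem mem_span_fixedSubmodule (P : Subgroup G) [Fintype (G ⧸ P)]
    (hP : ∀ g, (∀ c ∈ fixedSubfield K P (act.comp P.subtype), act g c = c) → g ∈ P)
    {v : V} (hv : ∀ g ∈ P, ρ g v = v) :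
    v ∈ Submodule.span K (fixedSubmodule K G act V ρ hsemi : Set V) := by
  classical
  set L := fixedSubfield K P (act.comp P.subtype)
  set ev : L → G ⧸ P → K := fun c q => act q.out c
  set T := Fintype.linearCombination K fun q : G ⧸ P => ρ q.out v
  have hdistinct : Function.Injective fun q : G ⧸ P =>
      ((act q.out : K →+* K).comp L.subtype : L →* K) := by
    intro q₁ q₂ h
    rw [← q₁.out_eq', ← q₂.out_eq', QuotientGroup.eq]
    refine hP _ fun c hc => ?_
    have h' : act q₂.out c = act q₁.out c := (DFunLike.congr_fun h ⟨c, hc⟩).symm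
    rw [map_mul, RingAut.mul_apply, h', ← RingAut.mul_apply, ← map_mul, inv_mul_cancel, map_one]
    rfl
  have hspan : Submodule.span K (Set.range ev) = ⊤ :=
    span_range_eval_eq_top ((linearIndependent_monoidHom L K).comp _ hdistinct)
  have hT_fixed : ∀ c : L, T (ev c) ∈ fixedSubmodule K G act V ρ hsemi := fun c g => by
    have hcv : ∀ g ∈ P, ρ g ((c : K) • v) = (c : K) • v := fun g hg => by
      have hc : act g c = c := c.2 ⟨g, hg⟩
      rw [hsemi, hc, hv g hg]
    have hTc : T (ev c) = ∑ q : G ⧸ P, ρ q.out ((c : K) • v) := by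
      simp only [T, ev, Fintype.linearCombination_apply, hsemi]
    rw [hTc]
    exact apply_sum_out_eq_self ρ P hcv g
  set q₀ : G ⧸ P := ((1 : G) : G ⧸ P)
  have hv_eq : T (Pi.single q₀ 1) = v := by
    rw [Fintype.linearCombination_apply_single, one_smul, apply_eq_of_mk_eq ρ hv q₀.out_eq',
      map_one]
    rfl
  have hmem : T (Pi.single q₀ 1) ∈ (Submodule.span K (Set.range ev)).map T :=
    Submodule.mem_map_of_mem (hspan ▸ Submodule.mem_top)
  rw [Submodule.map_span, ← Set.range_comp] at hmem
  rw [← hv_eq]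
  exact Submodule.span_mono (Set.range_subset_iff.2 hT_fixed) hmem

theorem mem_comap_fixingSubgroup_of_fixes_fixedSubfield {B : Set K} {g : G}
    (hg : ∀ c ∈ fixedSubfield K _ (act.comp ((fixingSubgroup (K ≃+* K) B).comap act).subtype),
      act g c = c) :
    g ∈ (fixingSubgroup (K ≃+* K) B).comap act :=
  fun b => hg b fun h => h.2 b

theorem span_fixedSubmodule_eq_top
    (hprecompact : ∀ H : Subgroup G, (∃ B : Finset K,
      ∀ g : G, (∀ b ∈ B, act g b = b) → g ∈ H) → H.index ≠ 0)
    (hsmooth : ∀ v : V, ∃ B : Finset K, ∀ g : G, (∀ b ∈ B, act g b = b) → ρ g v = v) :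
    Submodule.span K (fixedSubmodule K G act V ρ hsemi : Set V) = ⊤ := by
  refine eq_top_iff.2 fun v _ => ?_
  obtain ⟨B, hB⟩ := hsmooth v
  set P := (fixingSubgroup (K ≃+* K) (B : Set K)).comap act
  have : P.FiniteIndex := ⟨hprecompact P ⟨B, fun g hg ⟨b, hb⟩ => hg b hb⟩⟩
  have := Fintype.ofFinite (G ⧸ P)
  exact mem_span_fixedSubmodule hsemi P (fun g => mem_comap_fixingSubgroup_of_fixes_fixedSubfield)
    fun g hg => hB g fun b hb => hg ⟨b, hb⟩

end Semilinear

theorem hilbert90_precompact_general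
    (K : Type) [Field K] (G : Type) [Group G]
    (act : G →* (K ≃+* K))
    (hprecompact : ∀ H : Subgroup G, (∃ B : Finset K,
      ∀ g : G, (∀ b ∈ B, act g b = b) → g ∈ H) → H.index ≠ 0)
    (V : Type) [AddCommGroup V] [Module K V]
    (ρ : G →* (V ≃+ V))
    (hsemi : ∀ (g : G) (c : K) (v : V), ρ g (c • v) = act g c • ρ g v)
    (hsmooth : ∀ v : V, ∃ B : Finset K,
      ∀ g : G, (∀ b ∈ B, act g b = b) → ρ g v = v) :
    Function.Bijective (natTensorMap K G act V ρ hsemi) := by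
  rw [natTensorMap_eq_liftBaseChange]
  refine ⟨injective_liftBaseChange_fixedSubmodule hsemi, LinearMap.range_eq_top.1 ?_⟩
  rw [LinearMap.range_liftBaseChange, Submodule.range_subtype]
  exact span_fixedSubmodule_eq_top hsemi hprecompact hsmooth

/-- **An analogue of Hilbert's Theorem 90 for precompact groups.**  Let `G` be
a group acting faithfully on a field `K` by field automorphisms (via `act`).
For a finite `B ⊆ K`, `G_{(B)}` denotes the pointwise stabilizer
`{g | ∀ b ∈ B, act g b = b}`.  Assume `G` is precompact: every subgroup of `G`
containing some `G_{(B)}` has finite index (`index ≠ 0`).  Let `(V, ρ)` be a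
smooth `K`-semilinear representation of `G`: semilinear via `hsemi`, and every
vector fixed by some `G_{(B)}` (`hsmooth`).  Then the natural map
`K ⊗_{K^G} V^G → V`, `c ⊗ v ↦ c • v`, is bijective; equivalently `V` is a
direct sum of copies of `K`. -/
theorem hilbert90_precompact
    (K : Type) [Field K] (G : Type) [Group G]
    (act : G →* (K ≃+* K))
    (hfaithful : ∀ g : G, (∀ c : K, act g c = c) → g = 1)
    (hprecompact : ∀ H : Subgroup G, (∃ B : Finset K,
      ∀ g : G, (∀ b ∈ B, act g b = b) → g ∈ H) → H.index ≠ 0)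
    (V : Type) [AddCommGroup V] [Module K V]
    (ρ : G →* (V ≃+ V))
    (hsemi : ∀ (g : G) (c : K) (v : V), ρ g (c • v) = act g c • ρ g v)
    (hsmooth : ∀ v : V, ∃ B : Finset K,
      ∀ g : G, (∀ b ∈ B, act g b = b) → ρ g v = v) :
    Function.Bijective (natTensorMap K G act V ρ hsemi) :=
  hilbert90_precompact_general K G act hprecompact V ρ hsemi hsmooth
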